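/- arXiv:2403.15596 — 4 statements merged into one kernel-verified Lean document; each statement's English description precedes it below -/
import Mathlib

section
/- Let n, m ≥ 1, let A : ℕ → Matrix (Fin n) (Fin n) ℂ be unitary matrices, let z : ℕ → (Fin n → ℂ) satisfy z(t+1) = A(t) z(t), let R be an m × n complex matrix, and define y(t) = R z(t). Fix a stride k ≥ 1 and memory length ℓ with ℓ·k ≤ t, and let M(t) be the (ℓ+1)m × n block matrix whose j-th block row (j = 0, …, ℓ) is R ⬝ A(t−jk)ᴴ ⬝ ⋯ ⬝ A(t−1)ᴴ. If M(t)ᴴ M(t) is invertible (i.e., M(t) has full column rank n), then y(t+1) = R ⬝ A(t) ⬝ (M(t)ᴴ M(t))⁻¹ ⬝ M(t)ᴴ ⬝ Y_ℓ(t), where Y_ℓ(t) is the vertical stacking of y(t), y(t−k), …, y(t−ℓk). In other words, the reduced quantity satisfies a closed, linear, time-delayed evolution equation whose coefficient is R A(t) M(t)⁺ with M(t)⁺ = (M(t)ᴴM(t))⁻¹M(t)ᴴ the left inverse (Moore–Penrose pseudoinverse) of M(t). -/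
/-!
Unitarity lets the dynamics be run backwards: `z (t - j k) = A(t - j k)ᴴ ⋯ A(t - 1)ᴴ z t`, so the
`j`-th block row of `M` applied to `z t` is `y (t - j k)`, i.e. `M z(t) = Y`. Full column rank
makes `(MᴴM)⁻¹Mᴴ` a left inverse of `M`, which recovers `z t = (MᴴM)⁻¹Mᴴ Y`, and then
`y (t + 1) = R A(t) z(t)`.
-/

open Matrix

variable {ι κ α : Type*}

theorem mulVec_prod_map_range_eq_of_backward_step [Fintype ι] [DecidableEq ι] [CommRing α]
    (B : ℕ → Matrix ι ι α) (z : ℕ → ι → α) (hB : ∀ s, B s *ᵥ z (s + 1) = z s) (u a : ℕ) :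
    ((List.range a).map (fun s => B (u + s))).prod *ᵥ z (u + a) = z u := by
  induction a with
  | zero => simp
  | succ a ih =>
    rw [List.prod_range_succ, ← mulVec_mulVec, ← Nat.add_assoc, hB, ih]

theorem conjTranspose_mulVec_succ_of_unitary [Fintype ι] [DecidableEq ι] [CommRing α]
    [StarRing α] (A : ℕ → Matrix ι ι α) (hA : ∀ t, (A t)ᴴ * A t = 1)
    (z : ℕ → ι → α) (hz : ∀ t, z (t + 1) = A t *ᵥ z t) (s : ℕ) :
    (A s)ᴴ *ᵥ z (s + 1) = z s := by
  rw [hz, mulVec_mulVec, hA, one_mulVec]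

theorem inv_mul_mul_mulVec_cancel [Fintype ι] [DecidableEq ι] [Fintype κ] [CommRing α]
    (B : Matrix ι κ α) (M : Matrix κ ι α) (h : IsUnit (B * M)) (x : ι → α) :
    ((B * M)⁻¹ * B) *ᵥ (M *ᵥ x) = x := by
  rw [mulVec_mulVec, Matrix.mul_assoc, nonsing_inv_mul _ ((isUnit_iff_isUnit_det _).mp h),
    one_mulVec]

theorem statement2_general (n m : ℕ)
    (A : ℕ → Matrix (Fin n) (Fin n) ℂ)
    (hA : ∀ t, (A t)ᴴ * A t = 1)
    (z : ℕ → Fin n → ℂ)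
    (hz : ∀ t, z (t + 1) = A t *ᵥ z t)
    (R : Matrix (Fin m) (Fin n) ℂ)
    (y : ℕ → Fin m → ℂ)
    (hy : ∀ t, y t = R *ᵥ z t)
    (k : ℕ)
    (t ℓ : ℕ) (hℓ : ℓ * k ≤ t)
    (M : Matrix (Fin (ℓ + 1) × Fin m) (Fin n) ℂ)
    (hM : ∀ (j : Fin (ℓ + 1)) (i : Fin m) (c : Fin n),
      M (j, i) c =
        (R * ((List.range ((j : ℕ) * k)).map
            (fun s => (A (t - (j : ℕ) * k + s))ᴴ)).prod) i c)
    (Y : Fin (ℓ + 1) × Fin m → ℂ)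
    (hY : ∀ (j : Fin (ℓ + 1)) (i : Fin m), Y (j, i) = y (t - (j : ℕ) * k) i)
    (hfull : IsUnit (Mᴴ * M)) :
    y (t + 1) = (R * A t * (Mᴴ * M)⁻¹ * Mᴴ) *ᵥ Y := by
  have hMz : M *ᵥ z t = Y := by
    ext ⟨j, i⟩
    have hjk : (j : ℕ) * k ≤ t := (Nat.mul_le_mul_right k (Nat.lt_succ_iff.mp j.isLt)).trans hℓ
    have hrow : (M *ᵥ z t) (j, i) = ((R * ((List.range ((j : ℕ) * k)).map
        (fun s => (A (t - (j : ℕ) * k + s))ᴴ)).prod) *ᵥ z t) i := by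
      simp only [mulVec, dotProduct, hM]
    have hback := mulVec_prod_map_range_eq_of_backward_step _ z
      (conjTranspose_mulVec_succ_of_unitary A hA z hz) (t - (j : ℕ) * k) ((j : ℕ) * k)
    rw [Nat.sub_add_cancel hjk] at hback
    rw [hrow, ← mulVec_mulVec, hback, hY, hy]
  calc y (t + 1) = (R * A t) *ᵥ (((Mᴴ * M)⁻¹ * Mᴴ) *ᵥ (M *ᵥ z t)) := by
        rw [inv_mul_mul_mulVec_cancel _ _ hfull, hy, hz, mulVec_mulVec]
    _ = (R * A t * (Mᴴ * M)⁻¹ * Mᴴ) *ᵥ Y := by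
        rw [hMz, mulVec_mulVec, Matrix.mul_assoc (R * A t)]

/-- If the stacked memory matrix `M t` has full column rank
(i.e. `M tᴴ * M t` is invertible), then the reduced quantity `y` satisfies the
closed, linear, time-delayed evolution equation
`y (t+1) = R ⬝ A t ⬝ (M tᴴ M t)⁻¹ ⬝ M tᴴ *ᵥ Y_ℓ t`. -/
theorem statement2 (n m : ℕ) (hn : 1 ≤ n) (hm : 1 ≤ m)
    (A : ℕ → Matrix (Fin n) (Fin n) ℂ)
    (hA : ∀ t, (A t)ᴴ * A t = 1)
    (z : ℕ → Fin n → ℂ)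
    (hz : ∀ t, z (t + 1) = A t *ᵥ z t)
    (R : Matrix (Fin m) (Fin n) ℂ)
    (y : ℕ → Fin m → ℂ)
    (hy : ∀ t, y t = R *ᵥ z t)
    (k : ℕ) (hk : 1 ≤ k)
    (t ℓ : ℕ) (hℓ : ℓ * k ≤ t)
    (M : Matrix (Fin (ℓ + 1) × Fin m) (Fin n) ℂ)
    (hM : ∀ (j : Fin (ℓ + 1)) (i : Fin m) (c : Fin n),
      M (j, i) c =
        (R * ((List.range ((j : ℕ) * k)).map
            (fun s => (A (t - (j : ℕ) * k + s))ᴴ)).prod) i c)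
    (Y : Fin (ℓ + 1) × Fin m → ℂ)
    (hY : ∀ (j : Fin (ℓ + 1)) (i : Fin m), Y (j, i) = y (t - (j : ℕ) * k) i)
    (hfull : IsUnit (Mᴴ * M)) :
    y (t + 1) = (R * A t * (Mᴴ * M)⁻¹ * Mᴴ) *ᵥ Y :=
  statement2_general n m A hA z hz R y hy k t ℓ hℓ M hM Y hY hfull
end

section
/- Let K ≥ 1, let α, β be complex numbers with α ≠ 0, and identify K² × K² matrices with matrices indexed by (Fin K × Fin K). Suppose 𝒮 is a K² × K⁴ complex matrix and 𝒮⁺ is a K⁴ × K² complex matrix such that: (i) 𝒮 ⬝ 𝒮⁺ = I (the K² × K² identity), and (ii) for every K × K complex matrix W, 𝒮⁺ ⬝ vec(α·W + β·I) = vec(W ⊗ I + I ⊗ W). Then for every K × K Hermitian matrix h, every real Δt, and every K × K complex matrix Q, writing H₁ = h ⊗ I + I ⊗ h, one has 𝒮 ⬝ (exp(iΔt·H₁ᵀ) ⊗ exp(−iΔt·H₁)) ⬝ 𝒮⁺ ⬝ vec(Q) = vec(exp(−iΔt·h) ⬝ Q ⬝ exp(iΔt·h)). That is, the memoryless reduced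 propagation scheme with reduction map 𝒮 reproduces exactly the unitary one-step evolution of Q generated by the one-electron Hamiltonian h. -/
open Matrix Kronecker NormedSpace

/-- Column-stacking vectorization of a square matrix: the `(j, i)` entry of
`vec X` (column index first) is `X i j`. -/
def vec {n : Type*} (X : Matrix n n ℂ) : n × n → ℂ := fun p => X p.2 p.1

section Aux

variable {n : Type*} [Fintype n] [DecidableEq n]

/-- `X ↦ X ⊗ₖ 1` as a ring hom. -/
def kronLeftRingHom (n : Type*) [Fintype n] [DecidableEq n] :
    Matrix n n ℂ →+* Matrix (n × n) (n × n) ℂ where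
  toFun X := X ⊗ₖ (1 : Matrix n n ℂ)
  map_one' := Matrix.one_kronecker_one
  map_mul' X Y := by rw [← Matrix.mul_kronecker_mul, Matrix.one_mul]
  map_zero' := Matrix.zero_kronecker _
  map_add' X Y := Matrix.add_kronecker X Y _

/-- `X ↦ 1 ⊗ₖ X` as a ring hom. -/
def kronRightRingHom (n : Type*) [Fintype n] [DecidableEq n] :
    Matrix n n ℂ →+* Matrix (n × n) (n × n) ℂ where
  toFun X := (1 : Matrix n n ℂ) ⊗ₖ X
  map_one' := Matrix.one_kronecker_one
  map_mul' X Y := by rw [← Matrix.mul_kronecker_mul, Matrix.one_mul]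
  map_zero' := Matrix.kronecker_zero _
  map_add' X Y := Matrix.kronecker_add _ X Y

theorem continuous_kronLeft :
    Continuous fun X : Matrix n n ℂ => X ⊗ₖ (1 : Matrix n n ℂ) :=
  continuous_pi fun i => continuous_pi fun j =>
    Continuous.mul ((continuous_apply j.1).comp (continuous_apply i.1)) continuous_const

theorem continuous_kronRight :
    Continuous fun X : Matrix n n ℂ => (1 : Matrix n n ℂ) ⊗ₖ X :=
  continuous_pi fun i => continuous_pi fun j =>
    Continuous.mul continuous_const ((continuous_apply j.2).comp (continuous_apply i.2))

theorem exp_kronecker_one (A : Matrix n n ℂ) :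
    exp (A ⊗ₖ (1 : Matrix n n ℂ)) = exp A ⊗ₖ (1 : Matrix n n ℂ) := by
  letI : SeminormedRing (Matrix n n ℂ) := Matrix.linftyOpSemiNormedRing
  letI : NormedRing (Matrix n n ℂ) := Matrix.linftyOpNormedRing
  letI : NormedAlgebra ℂ (Matrix n n ℂ) := Matrix.linftyOpNormedAlgebra
  letI : SeminormedRing (Matrix (n × n) (n × n) ℂ) := Matrix.linftyOpSemiNormedRing
  letI : NormedRing (Matrix (n × n) (n × n) ℂ) := Matrix.linftyOpNormedRing
  letI : NormedAlgebra ℂ (Matrix (n × n) (n × n) ℂ) := Matrix.linftyOpNormedAlgebra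
  letI : NormedAlgebra ℚ (Matrix n n ℂ) := Matrix.linftyOpNormedAlgebra
  letI : NormedAlgebra ℚ (Matrix (n × n) (n × n) ℂ) := Matrix.linftyOpNormedAlgebra
  exact (map_exp (kronLeftRingHom n) continuous_kronLeft A).symm

theorem one_kronecker_exp (A : Matrix n n ℂ) :
    exp ((1 : Matrix n n ℂ) ⊗ₖ A) = (1 : Matrix n n ℂ) ⊗ₖ exp A := by
  letI : SeminormedRing (Matrix n n ℂ) := Matrix.linftyOpSemiNormedRing
  letI : NormedRing (Matrix n n ℂ) := Matrix.linftyOpNormedRing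
  letI : NormedAlgebra ℂ (Matrix n n ℂ) := Matrix.linftyOpNormedAlgebra
  letI : SeminormedRing (Matrix (n × n) (n × n) ℂ) := Matrix.linftyOpSemiNormedRing
  letI : NormedRing (Matrix (n × n) (n × n) ℂ) := Matrix.linftyOpNormedRing
  letI : NormedAlgebra ℂ (Matrix (n × n) (n × n) ℂ) := Matrix.linftyOpNormedAlgebra
  letI : NormedAlgebra ℚ (Matrix n n ℂ) := Matrix.linftyOpNormedAlgebra
  letI : NormedAlgebra ℚ (Matrix (n × n) (n × n) ℂ) := Matrix.linftyOpNormedAlgebra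
  exact (map_exp (kronRightRingHom n) continuous_kronRight A).symm

/-- exponential of a Kronecker sum. -/
theorem exp_kron_sum (A : Matrix n n ℂ) :
    exp (A ⊗ₖ (1 : Matrix n n ℂ) + (1 : Matrix n n ℂ) ⊗ₖ A)
      = exp A ⊗ₖ exp A := by
  have hc : Commute (A ⊗ₖ (1 : Matrix n n ℂ)) ((1 : Matrix n n ℂ) ⊗ₖ A) := by
    show _ * _ = _ * _
    simp [← Matrix.mul_kronecker_mul]
  rw [Matrix.exp_add_of_commute _ _ hc, exp_kronecker_one, one_kronecker_exp,
    ← Matrix.mul_kronecker_mul]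
  simp

/-- `vec (A X B) = (Bᵀ ⊗ A) vec X`. -/
theorem kron_mulVec_vec (A X B : Matrix n n ℂ) :
    (Bᵀ ⊗ₖ A) *ᵥ _root_.vec X = _root_.vec (A * X * B) := by
  ext ⟨j, i⟩
  simp only [Matrix.mulVec, dotProduct, _root_.vec, Matrix.kroneckerMap_apply,
    Matrix.mul_apply, Matrix.transpose_apply, Fintype.sum_prod_type]
  simp_rw [Finset.sum_mul]
  exact Finset.sum_congr rfl fun l _ => Finset.sum_congr rfl fun k _ => by ring

end Aux

/-- Suppose the reduction matrix `𝒮` (of size `K² × K⁴`) and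
`𝒮⁺` (of size `K⁴ × K²`) satisfy (i) `𝒮 ⬝ 𝒮⁺ = I` and (ii)
`𝒮⁺ vec (α W + β I) = vec (W ⊗ I + I ⊗ W)` for all `W`, with `α ≠ 0`.  Then for
every Hermitian `h`, real `Δt`, and matrix `Q`, the memoryless reduced
propagation scheme with `H₁ = h ⊗ I + I ⊗ h` reproduces exactly the one-step
unitary evolution: `𝒮 (exp(iΔtH₁ᵀ) ⊗ exp(−iΔtH₁)) 𝒮⁺ vec Q
= vec (exp(−iΔt h) Q exp(iΔt h))`. -/
theorem statement15 (K : ℕ) (hK : 1 ≤ K) (α β : ℂ) (hα : α ≠ 0)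
    (S : Matrix (Fin K × Fin K) ((Fin K × Fin K) × (Fin K × Fin K)) ℂ)
    (Splus : Matrix ((Fin K × Fin K) × (Fin K × Fin K)) (Fin K × Fin K) ℂ)
    (hSS : S * Splus = 1)
    (hSplus : ∀ W : Matrix (Fin K) (Fin K) ℂ,
      Splus *ᵥ _root_.vec (α • W + β • (1 : Matrix (Fin K) (Fin K) ℂ))
        = _root_.vec (W ⊗ₖ (1 : Matrix (Fin K) (Fin K) ℂ)
            + (1 : Matrix (Fin K) (Fin K) ℂ) ⊗ₖ W)) :
    ∀ (h : Matrix (Fin K) (Fin K) ℂ), h.IsHermitian → ∀ (Δt : ℝ)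
      (Q : Matrix (Fin K) (Fin K) ℂ),
      S *ᵥ ((exp ((Complex.I * (Δt : ℂ)) •
              (h ⊗ₖ (1 : Matrix (Fin K) (Fin K) ℂ)
                + (1 : Matrix (Fin K) (Fin K) ℂ) ⊗ₖ h)ᵀ)
            ⊗ₖ exp ((-(Complex.I * (Δt : ℂ))) •
              (h ⊗ₖ (1 : Matrix (Fin K) (Fin K) ℂ)
                + (1 : Matrix (Fin K) (Fin K) ℂ) ⊗ₖ h)))
          *ᵥ (Splus *ᵥ _root_.vec Q))
        = _root_.vec (exp ((-(Complex.I * (Δt : ℂ))) • h) * Q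
            * exp ((Complex.I * (Δt : ℂ)) • h)) := by
  intro h _ Δt Q
  set c : ℂ := Complex.I * (Δt : ℂ) with hc
  set U : Matrix (Fin K) (Fin K) ℂ := exp ((-c) • h) with hU
  set V : Matrix (Fin K) (Fin K) ℂ := exp (c • h) with hV
  have hcomm : Commute ((-c) • h) (c • h) :=
    ((Commute.refl h).smul_left (-c)).smul_right c
  have hUV : U * V = 1 := by
    rw [hU, hV, ← Matrix.exp_add_of_commute _ _ hcomm, neg_smul, neg_add_cancel,
      NormedSpace.exp_zero]
  -- identify the two exponentials as Kronecker products
  have hsmul : ∀ d : ℂ, d • (h ⊗ₖ (1 : Matrix (Fin K) (Fin K) ℂ)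
      + (1 : Matrix (Fin K) (Fin K) ℂ) ⊗ₖ h)
      = (d • h) ⊗ₖ (1 : Matrix (Fin K) (Fin K) ℂ)
        + (1 : Matrix (Fin K) (Fin K) ℂ) ⊗ₖ (d • h) := fun d => by
    rw [smul_add, Matrix.smul_kronecker, Matrix.kronecker_smul]
  have hexpneg : exp ((-c) • (h ⊗ₖ (1 : Matrix (Fin K) (Fin K) ℂ)
      + (1 : Matrix (Fin K) (Fin K) ℂ) ⊗ₖ h)) = U ⊗ₖ U := by
    rw [hsmul, exp_kron_sum]
  have hexppos : exp (c • (h ⊗ₖ (1 : Matrix (Fin K) (Fin K) ℂ)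
      + (1 : Matrix (Fin K) (Fin K) ℂ) ⊗ₖ h)ᵀ) = (V ⊗ₖ V)ᵀ := by
    rw [← Matrix.transpose_smul, Matrix.exp_transpose, hsmul, exp_kron_sum]
  rw [hexpneg, hexppos]
  -- decompose Q
  set W : Matrix (Fin K) (Fin K) ℂ := α⁻¹ • (Q - β • (1 : Matrix (Fin K) (Fin K) ℂ))
    with hW
  have hQ : α • W + β • (1 : Matrix (Fin K) (Fin K) ℂ) = Q := by
    rw [hW, smul_smul, mul_inv_cancel₀ hα, one_smul, sub_add_cancel]
  rw [← hQ, hSplus W, kron_mulVec_vec]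
  -- simplify the conjugated Kronecker sum
  set W' : Matrix (Fin K) (Fin K) ℂ := U * W * V with hW'
  have hmid : U ⊗ₖ U * (W ⊗ₖ (1 : Matrix (Fin K) (Fin K) ℂ)
        + (1 : Matrix (Fin K) (Fin K) ℂ) ⊗ₖ W) * (V ⊗ₖ V)
      = W' ⊗ₖ (1 : Matrix (Fin K) (Fin K) ℂ)
        + (1 : Matrix (Fin K) (Fin K) ℂ) ⊗ₖ W' := by
    rw [Matrix.mul_add, Matrix.add_mul]
    simp only [← Matrix.mul_kronecker_mul, Matrix.mul_one, Matrix.one_mul]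
    rw [hUV, hW']
  rw [hmid, ← hSplus W', Matrix.mulVec_mulVec, hSS, Matrix.one_mulVec]
  congr 1
  have hexpand : U * (α • W + β • (1 : Matrix (Fin K) (Fin K) ℂ)) * V
      = α • (U * W * V) + β • (U * V) := by
    simp [Matrix.mul_add, Matrix.add_mul, mul_smul_comm, smul_mul_assoc]
  rw [hexpand, hUV, ← hW']
end

section
/- Let N_C, K ≥ 1, let Δt be real, let H : ℕ → Matrix (Fin N_C) (Fin N_C) ℂ be Hermitian matrices, and set U(s) = exp(−i Δt H(s)). Suppose P : ℕ → Matrix (Fin N_C) (Fin N_C) ℂ satisfies P(s+1) = U(s) P(s) U(s)ᴴ. Let B̃ be a K² × N_C² complex matrix and define Q(t) by vec(Q(t)) = B̃ ⬝ vec(P(t)). Fix a stride k ≥ 1 and memory ℓ ≥ 0 with ℓk ≤ t; for 1 ≤ j ≤ ℓ define C_{jk}(t) = U(t−1)⋯U(t−jk), A_{jk}(t) = U(t−jk)ᴴ⋯U(t−1)ᴴ, and 𝒟_j = B̃ ⬝ (C_{jk}(t)ᵀ ⊗ A_{jk}(t)); let M(t) be the (ℓ+1)K² × N_C² block matrix stacking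 B̃, 𝒟₁, …, 𝒟_ℓ, and let q_ℓ(t) be the vertical stacking of vec(Q(t)), vec(Q(t−k)), …, vec(Q(t−ℓk)). If M(t)ᴴ M(t) is invertible (M(t) has full column rank), then vec(Q(t+1)) = B̃ ⬝ (exp(iΔt·H(t)ᵀ) ⊗ exp(−iΔt·H(t))) ⬝ (M(t)ᴴM(t))⁻¹ ⬝ M(t)ᴴ ⬝ q_ℓ(t). That is, the 1-electron reduced density matrix satisfies a closed, linear, time-delayed propagation equation. -/
open Matrix Kronecker NormedSpace

/-- Column-stacking vectorization of a square matrix: the `(j, i)` entry of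
`vec X` (column index first) is `X i j`. -/
def vecC {n : Type*} (X : Matrix n n ℂ) : n × n → ℂ := fun p => X p.2 p.1

/-- Kronecker-vec identity: `(Bᵀ ⊗ A) vec X = vec (A X B)`. -/
lemma vec_kron {n : Type*} [Fintype n] [DecidableEq n] (A B X : Matrix n n ℂ) :
    (Bᵀ ⊗ₖ A) *ᵥ vecC X = vecC (A * X * B) := by
  funext p
  simp only [vecC, mulVec, dotProduct, kroneckerMap_apply, transpose_apply,
    Matrix.mul_apply, Fintype.sum_prod_type, Finset.sum_mul, Finset.mul_sum]
  congr 1; funext i; congr 1; funext j; ring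

/-- Closed, linear, time-delayed propagation of the 1-electron
reduced density matrix.  With `U s = exp(−iΔt H s)`, `P (s+1) = U s P s (U s)ᴴ`,
`vec (Q s) = B̃ vec (P s)`, stride `k`, memory `ℓ` with `ℓk ≤ t`, block matrix
`M t` stacking `B̃ ⬝ (C_{jk}(t)ᵀ ⊗ A_{jk}(t))` for `j = 0, …, ℓ`, and `q_ℓ(t)`
stacking `vec (Q (t − jk))`: if `M tᴴ M t` is invertible then
`vec (Q (t+1)) = B̃ (exp(iΔt H tᵀ) ⊗ exp(−iΔt H t)) (M tᴴ M t)⁻¹ M tᴴ q_ℓ(t)`. -/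
theorem statement17 (NC K : ℕ) (hNC : 1 ≤ NC) (hK : 1 ≤ K) (Δt : ℝ)
    (H : ℕ → Matrix (Fin NC) (Fin NC) ℂ) (hH : ∀ s, (H s).IsHermitian)
    (U : ℕ → Matrix (Fin NC) (Fin NC) ℂ)
    (hU : ∀ s, U s = exp ((-(Complex.I * (Δt : ℂ))) • H s))
    (P : ℕ → Matrix (Fin NC) (Fin NC) ℂ)
    (hP : ∀ s, P (s + 1) = U s * P s * (U s)ᴴ)
    (Btil : Matrix (Fin K × Fin K) (Fin NC × Fin NC) ℂ)
    (Q : ℕ → Matrix (Fin K) (Fin K) ℂ)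
    (hQ : ∀ s, vecC (Q s) = Btil *ᵥ vecC (P s))
    (k ℓ t : ℕ) (hk : 1 ≤ k) (hℓ : ℓ * k ≤ t)
    (M : Matrix (Fin (ℓ + 1) × (Fin K × Fin K)) (Fin NC × Fin NC) ℂ)
    (hM : ∀ (j : Fin (ℓ + 1)) (r : Fin K × Fin K) (c : Fin NC × Fin NC),
      M (j, r) c =
        (Btil *
          (((((List.range ((j : ℕ) * k)).map (fun s => U (t - 1 - s))).prod)ᵀ)
            ⊗ₖ (((List.range ((j : ℕ) * k)).map
                (fun s => (U (t - (j : ℕ) * k + s))ᴴ)).prod))) r c)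
    (q : Fin (ℓ + 1) × (Fin K × Fin K) → ℂ)
    (hq : ∀ (j : Fin (ℓ + 1)) (r : Fin K × Fin K),
      q (j, r) = vecC (Q (t - (j : ℕ) * k)) r)
    (hfull : IsUnit (Mᴴ * M)) :
    vecC (Q (t + 1)) =
      Btil *ᵥ ((exp ((Complex.I * (Δt : ℂ)) • (H t)ᵀ)
          ⊗ₖ exp ((-(Complex.I * (Δt : ℂ))) • H t))
        *ᵥ (((Mᴴ * M)⁻¹ * Mᴴ) *ᵥ q)) := by
  -- conjugate transpose of U
  have hUstar : ∀ s, (U s)ᴴ = exp ((Complex.I * (Δt : ℂ)) • H s) := by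
    intro s
    rw [hU, ← Matrix.exp_conjTranspose]
    congr 1
    rw [conjTranspose_smul, (hH s).eq]
    congr 1
    simp [Complex.ext_iff]
  -- unitarity of U
  have hUU : ∀ s, (U s)ᴴ * U s = 1 := by
    intro s
    have comm : Commute ((Complex.I * (Δt:ℂ)) • H s) ((-(Complex.I * (Δt:ℂ))) • H s) :=
      ((Commute.refl (H s)).smul_left _).smul_right _
    have e := (Matrix.exp_add_of_commute _ _ comm).symm
    rw [hUstar, hU, e, ← add_smul]
    simp [exp_zero]
  -- notation for the forward propagator
  set C : ℕ → Matrix (Fin NC) (Fin NC) ℂ :=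
    fun m => ((List.range m).map (fun s => U (t - 1 - s))).prod with hC
  have hCsucc : ∀ m, C (m + 1) = C m * U (t - 1 - m) := by
    intro m
    simp [hC, List.range_succ]
  -- forward propagation
  have Ckey : ∀ m, m ≤ t → P t = C m * P (t - m) * (C m)ᴴ := by
    intro m
    induction m with
    | zero => intro _; simp [hC]
    | succ m ih =>
      intro hm
      have hm' : m ≤ t := by omega
      have h1 : t - m = (t - (m + 1)) + 1 := by omega
      have h2 : t - 1 - m = t - (m + 1) := by omega
      rw [ih hm', h1, hP, hCsucc, h2, conjTranspose_mul]
      noncomm_ring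
  -- the backward block is the conjugate transpose of the forward one
  have Akey : ∀ m, m ≤ t →
      ((List.range m).map (fun s => (U (t - m + s))ᴴ)).prod = (C m)ᴴ := by
    intro m
    induction m with
    | zero => intro _; simp [hC]
    | succ m ih =>
      intro hm
      have hm' : m ≤ t := by omega
      have hshift : ∀ s : ℕ, t - (m + 1) + (s + 1) = t - m + s := by omega
      have h2 : t - 1 - m = t - (m + 1) := by omega
      rw [List.range_succ_eq_map, List.map_cons, List.map_map, List.prod_cons]
      have : (fun s => (U (t - (m + 1) + s))ᴴ) ∘ Nat.succ
          = fun s => (U (t - m + s))ᴴ := by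
        funext s
        simp only [Function.comp_apply, Nat.succ_eq_add_one, hshift]
      rw [this, ih hm', hCsucc, conjTranspose_mul, h2, Nat.add_zero]
  -- C m is unitary
  have CC : ∀ m, (C m)ᴴ * C m = 1 := by
    intro m
    induction m with
    | zero => simp [hC]
    | succ m ih =>
      rw [hCsucc, conjTranspose_mul, mul_assoc, ← mul_assoc (C m)ᴴ, ih, one_mul, hUU]
  -- q is M applied to vec (P t)
  have hqM : q = M *ᵥ vecC (P t) := by
    funext x
    obtain ⟨j, r⟩ := x
    have hjk : (j : ℕ) * k ≤ t := by
      have : (j : ℕ) ≤ ℓ := Nat.lt_succ_iff.mp j.isLt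
      exact le_trans (Nat.mul_le_mul_right k this) hℓ
    have hrow : (M *ᵥ vecC (P t)) (j, r)
        = ((Btil * ((C ((j : ℕ) * k))ᵀ ⊗ₖ (C ((j : ℕ) * k))ᴴ)) *ᵥ vecC (P t)) r := by
      simp only [mulVec, dotProduct]
      congr 1
      funext c
      rw [hM j r c, Akey _ hjk]
    rw [hq, hrow, ← mulVec_mulVec, vec_kron]
    have : (C ((j : ℕ) * k))ᴴ * P t * C ((j : ℕ) * k) = P (t - (j : ℕ) * k) := by
      rw [Ckey _ hjk]
      calc (C ((j:ℕ)*k))ᴴ * (C ((j:ℕ)*k) * P (t - (j:ℕ)*k) * (C ((j:ℕ)*k))ᴴ) * C ((j:ℕ)*k)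
          = ((C ((j:ℕ)*k))ᴴ * C ((j:ℕ)*k)) * P (t - (j:ℕ)*k)
            * ((C ((j:ℕ)*k))ᴴ * C ((j:ℕ)*k)) := by noncomm_ring
        _ = P (t - (j:ℕ)*k) := by rw [CC]; simp
    rw [this, ← hQ]
  -- collapse the pseudoinverse
  have hcollapse : ((Mᴴ * M)⁻¹ * Mᴴ) *ᵥ q = vecC (P t) := by
    rw [hqM, mulVec_mulVec, Matrix.mul_assoc, Matrix.nonsing_inv_mul _
      ((Matrix.isUnit_iff_isUnit_det _).mp hfull), one_mulVec]
  -- identify the exponentials with U t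
  have hEt : exp ((Complex.I * (Δt : ℂ)) • (H t)ᵀ) = ((U t)ᴴ)ᵀ := by
    rw [← transpose_smul, Matrix.exp_transpose, hUstar]
  rw [hcollapse, hEt, ← hU, vec_kron, ← hP, hQ]
end

section
/- Let n, m ≥ 1, let A : ℝ → Matrix (Fin n) (Fin n) ℂ, and let Φ : ℝ → Matrix (Fin n) (Fin n) ℂ be a fundamental solution: for every t, Φ has derivative A(t) ⬝ Φ(t) at t (entrywise, i.e., HasDerivAt Φ (A(t)Φ(t)) t), and Φ(t) is invertible for every t. Fix z₀ ∈ ℂⁿ and set z(t) = Φ(t) ⬝ z₀. Let R be an m × n complex matrix, y(t) = R z(t), fix Δs > 0 and ℓ ≥ 0, and let M(t) be the (ℓ+1)m × n block matrix whose j-th block row (j = 0, …, ℓ) is R ⬝ Φ(t−jΔs) ⬝ Φ(t)⁻¹, and let Y(t) be the vertical stacking of y(t), y(t−Δs), …, y(t−ℓΔs). If L(t) is an n × (ℓ+1)m matrix with L(t) ⬝ M(t) = I_n, then the function y has derivative R ⬝ A(t) ⬝ L(t) ⬝ Y(t) at t. -/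
open Matrix

/-- Continuous-time time-delayed propagation of a reduced
quantity.  Let `Φ` be a fundamental solution of `z′ = A t z` (entrywise
`HasDerivAt`, with `Φ t` invertible), `z t = Φ t z₀`, `y t = R z t`.  With
block matrix `M t` whose `j`-th block row is `R ⬝ Φ (t − jΔs) ⬝ (Φ t)⁻¹`, the
stacked vector `Y t` of `y (t − jΔs)`, and a left inverse `L t` of `M t`, the
function `y` has derivative `R ⬝ A t ⬝ L t ⬝ Y t` at `t` (entrywise). -/
theorem statement18 (n m : ℕ) (hn : 1 ≤ n) (hm : 1 ≤ m)
    (A : ℝ → Matrix (Fin n) (Fin n) ℂ)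
    (Φ : ℝ → Matrix (Fin n) (Fin n) ℂ)
    (hΦ : ∀ (t : ℝ) (i j : Fin n),
      HasDerivAt (fun s => Φ s i j) ((A t * Φ t) i j) t)
    (hΦinv : ∀ t : ℝ, IsUnit (Φ t))
    (z₀ : Fin n → ℂ)
    (z : ℝ → Fin n → ℂ) (hz : ∀ t, z t = Φ t *ᵥ z₀)
    (R : Matrix (Fin m) (Fin n) ℂ)
    (y : ℝ → Fin m → ℂ) (hy : ∀ t, y t = R *ᵥ z t)
    (Δs : ℝ) (hΔs : 0 < Δs) (ℓ : ℕ)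
    (M : ℝ → Matrix (Fin (ℓ + 1) × Fin m) (Fin n) ℂ)
    (hM : ∀ (t : ℝ) (j : Fin (ℓ + 1)) (i : Fin m) (c : Fin n),
      M t (j, i) c = (R * (Φ (t - (j : ℕ) * Δs) * (Φ t)⁻¹)) i c)
    (Y : ℝ → Fin (ℓ + 1) × Fin m → ℂ)
    (hY : ∀ (t : ℝ) (j : Fin (ℓ + 1)) (i : Fin m),
      Y t (j, i) = y (t - (j : ℕ) * Δs) i)
    (L : ℝ → Matrix (Fin n) (Fin (ℓ + 1) × Fin m) ℂ)
    (hL : ∀ t : ℝ, L t * M t = 1) :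
    ∀ (t : ℝ) (i : Fin m),
      HasDerivAt (fun s => y s i) (((R * A t * L t) *ᵥ Y t) i) t := by

  intro t i
  have hΦi : (Φ t)⁻¹ * Φ t = 1 :=
    nonsing_inv_mul _ ((isUnit_iff_isUnit_det _).1 (hΦinv t))
  have hYM : Y t = M t *ᵥ z t := by
    funext p
    obtain ⟨j, k⟩ := p
    have hrow : ∀ c, M t (j, k) c = (R * (Φ (t - (j : ℕ) * Δs) * (Φ t)⁻¹)) k c :=
      hM t j k
    calc Y t (j, k) = ((R * Φ (t - (j : ℕ) * Δs)) *ᵥ z₀) k := by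
          rw [hY, hy, hz, mulVec_mulVec]
      _ = ((R * (Φ (t - (j : ℕ) * Δs) * (Φ t)⁻¹) * Φ t) *ᵥ z₀) k := by
          rw [Matrix.mul_assoc R, Matrix.mul_assoc, hΦi, Matrix.mul_one]
      _ = (M t *ᵥ z t) (j, k) := by
          rw [hz, mulVec_mulVec]
          simp only [mulVec, dotProduct, hrow, mul_apply]
  have htarget : ((R * A t * L t) *ᵥ Y t) i = ((R * (A t * Φ t)) *ᵥ z₀) i := by
    rw [hYM, mulVec_mulVec, Matrix.mul_assoc (R * A t), hL, Matrix.mul_one, hz,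
      mulVec_mulVec, Matrix.mul_assoc]
  rw [htarget]
  have hfun : (fun s => y s i) = fun s => ∑ k, ∑ c, R i k * (Φ s k c * z₀ c) := by
    funext s
    rw [hy, hz]
    simp [mulVec, dotProduct, Finset.mul_sum]
  rw [hfun]
  have : HasDerivAt (fun s => ∑ k, ∑ c, R i k * (Φ s k c * z₀ c))
      (∑ k, ∑ c, R i k * ((A t * Φ t) k c * z₀ c)) t := by
    apply HasDerivAt.fun_sum
    intro k _
    apply HasDerivAt.fun_sum
    intro c _
    exact (((hΦ t k c).mul_const (z₀ c)).const_mul (R i k))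
  convert this using 1
  simp only [mulVec, dotProduct, mul_apply, Finset.sum_mul, Finset.mul_sum]
  rw [Finset.sum_comm]
  exact Finset.sum_congr rfl fun _ _ => Finset.sum_congr rfl fun _ _ =>
    Finset.sum_congr rfl fun _ _ => by ring
end
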